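/- A finite poset P is N-free (contains no quadruple a,b,c,d with a < c, b ⋖ c, b < d and all other distinct pairs incomparable) if and only if its incomparability orthoset (P, ⊥) is Dacey. -/

import Mathlib

/-- The orthocomplement of a subset in an orthoset `(O, r)`. -/
def perp {O : Type*} (r : O → O → Prop) (X : Set O) : Set O :=
  {y | ∀ x ∈ X, r y x}

/-- Incomparability relation of a poset. -/
def incomp {P : Type*} [PartialOrder P] (x y : P) : Prop := ¬ x ≤ y ∧ ¬ y ≤ x

/-- A basis of `X` is a maximal pairwise orthogonal subset of `X`. -/
def IsBasis {O : Type*} (r : O → O → Prop) (X B : Set O) : Prop :=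
  B ⊆ X ∧ B.Pairwise r ∧ ∀ C : Set O, B ⊆ C → C ⊆ X → C.Pairwise r → C = B

/-- The orthoset is Dacey: every orthoclosed set equals the double
orthocomplement of each of its bases. -/
def IsDacey {O : Type*} (r : O → O → Prop) : Prop :=
  ∀ X : Set O, X = perp r (perp r X) →
    ∀ B : Set O, IsBasis r X B → X = perp r (perp r B)

/-- `(a,b,c,d)` form an N. -/
def FormN {P : Type*} [PartialOrder P] (a b c d : P) : Prop :=
  a < c ∧ b ⋖ c ∧ b < d ∧ incomp a b ∧ incomp a d ∧ incomp c d

/-!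
Suppose some `y ⊥ B` lies strictly below an element `x` of `X`, and take `y` maximal. As `X` is
orthoclosed and `y ∉ X`, some `w ⊥ X` is comparable with `y`, necessarily `y < w`. A cover
`y ⋖ c ≤ x` is again orthogonal to `B`, since `b ∈ B` with `b < c` would make `(b, y, c, w)` an N;
and `c ≠ x` because `X` and `B^⊥` are disjoint, contradicting the maximality of `y`. Dually nothing
in `B^⊥` lies above `X`, so `X ⊆ B^⊥⊥`. Conversely, an N `(a, b, c, d)` gives the orthoclosed set
`X = {b, d}^⊥⊥`, and a basis of `X` through `d` is orthogonal to `c`, although `b ∈ X` lies below `c`.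
-/

open OrderDual Set

section Orthoset

variable {O : Type*} (r : O → O → Prop)

theorem perp_eq_upperPolar [Std.Symm r] : perp r = upperPolar r := by
  ext X y
  exact forall₂_congr fun _ _ => ⟨symm, symm⟩

theorem perp_perp_eq_lowerPolar_upperPolar [Std.Symm r] (X : Set O) :
    perp r (perp r X) = lowerPolar r (upperPolar r X) := by
  rw [← perp_eq_upperPolar]
  rfl

theorem perp_antitone : Antitone (perp r) := lowerPolar_anti r

theorem subset_perp_perp [Std.Symm r] (X : Set O) : X ⊆ perp r (perp r X) := by
  rw [perp_perp_eq_lowerPolar_upperPolar]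
  exact subset_lowerPolar_upperPolar r X

theorem perp_perp_perp [Std.Symm r] (X : Set O) : perp r (perp r (perp r X)) = perp r X := by
  rw [perp_perp_eq_lowerPolar_upperPolar]
  exact lowerPolar_upperPolar_lowerPolar r X

variable {r} {X B : Set O}

theorem IsBasis.mem_of_forall_rel [Std.Symm r] (hB : IsBasis r X B) {z : O} (hzX : z ∈ X)
    (hzB : ∀ b ∈ B, r z b) : z ∈ B := by
  have hpair : (insert z B).Pairwise r :=
    pairwise_insert_of_symm.2 ⟨hB.2.1, fun b hb _ => hzB b hb⟩
  rw [← hB.2.2 _ (subset_insert z B) (insert_subset hzX hB.1) hpair]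
  exact mem_insert z B

theorem IsBasis.disjoint_perp [Std.Symm r] [Std.Irrefl r] (hB : IsBasis r X B) :
    Disjoint X (perp r B) :=
  disjoint_left.2 fun z hzX hzB => irrefl z (hzB z (hB.mem_of_forall_rel hzX hzB))

theorem IsBasis.perp_perp_subset (hB : IsBasis r X B) (hX : X = perp r (perp r X)) :
    perp r (perp r B) ⊆ X :=
  (perp_antitone r (perp_antitone r hB.1)).trans hX.ge

theorem exists_isBasis_superset [Finite O] {C : Set O} (hCX : C ⊆ X) (hC : C.Pairwise r) :
    ∃ B, C ⊆ B ∧ IsBasis r X B := by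
  obtain ⟨B, hmax⟩ := (toFinite {D : Set O | C ⊆ D ∧ D ⊆ X ∧ D.Pairwise r}).exists_maximal
    ⟨C, subset_rfl, hCX, hC⟩
  obtain ⟨hCB, hBX, hB⟩ := hmax.prop
  exact ⟨B, hCB, hBX, hB, fun D hBD hDX hD =>
    (hmax.eq_of_subset ⟨hCB.trans hBD, hDX, hD⟩ hBD).symm⟩

end Orthoset

section Poset

variable {P : Type*} [PartialOrder P]

instance : Std.Symm (incomp (P := P)) := ⟨fun _ _ h => ⟨h.2, h.1⟩⟩

instance : Std.Irrefl (incomp (P := P)) := ⟨fun _ h => h.1 le_rfl⟩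

theorem incomp_toDual_eq : @incomp Pᵒᵈ _ = @incomp P _ := by
  funext x y
  exact propext and_comm

variable (P) in
def NFree : Prop := ¬ ∃ a b c d : P, FormN a b c d

theorem NFree.dual (hN : NFree P) : NFree Pᵒᵈ :=
  fun ⟨a, b, c, d, hac, hbc, hbd, hab, had, hcd⟩ =>
    hN ⟨ofDual d, ofDual c, ofDual b, ofDual a, hbd, hbc.ofDual, hac, hcd, had, hab⟩

variable [Finite P] {X B : Set P}

theorem NFree.exists_mem_perp_between (hN : NFree P) (hX : X = perp incomp (perp incomp X))
    (hB : IsBasis incomp X B) {x y : P} (hx : x ∈ X) (hy : y ∈ perp incomp B) (hyx : y < x) :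
    ∃ c ∈ perp incomp B, y < c ∧ c < x := by
  have hdisj := hB.disjoint_perp
  have hyX : y ∉ X := disjoint_right.1 hdisj hy
  obtain ⟨w, hw, hyw_comp⟩ : ∃ w ∈ perp incomp X, ¬ incomp y w := by
    rw [hX] at hyX
    simpa [perp] using hyX
  have hwx : incomp w x := hw x hx
  have hyw : y < w := by
    have hyw_le : y ≤ w := by
      by_contra h
      exact hyw_comp ⟨h, fun hwy => hwx.1 (hwy.trans hyx.le)⟩
    exact hyw_le.lt_of_ne (by rintro rfl; exact hwx.1 hyx.le)
  obtain ⟨c, hyc, hcx⟩ := exists_covBy_le_of_lt hyx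
  have hcB : c ∈ perp incomp B := by
    intro b hb
    have hyb : incomp y b := hy b hb
    have hbw : incomp b w := symm (hw b (hB.1 hb))
    refine ⟨fun hcb => hyb.1 (hyc.le.trans hcb), fun hbc_le => ?_⟩
    have hbc : b < c := hbc_le.lt_of_ne (by rintro rfl; exact hyb.1 hyc.le)
    exact hN ⟨b, y, c, w, hbc, hyc, hyw, symm hyb, hbw,
      fun hcw => hbw.1 (hbc.le.trans hcw), fun hwc => hwx.1 (hwc.trans hcx)⟩
  refine ⟨c, hcB, hyc.lt, hcx.lt_of_ne ?_⟩
  rintro rfl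
  exact disjoint_left.1 hdisj hx hcB

theorem NFree.not_lt_of_mem_perp_basis (hN : NFree P) (hX : X = perp incomp (perp incomp X))
    (hB : IsBasis incomp X B) {x y : P} (hx : x ∈ X) (hy : y ∈ perp incomp B) : ¬ y < x := by
  induction y using WellFoundedGT.induction generalizing x with
  | _ y ih =>
    intro hyx
    obtain ⟨c, hc, hyc, hcx⟩ := hN.exists_mem_perp_between hX hB hx hy hyx
    exact ih c hyc hx hc hcx

theorem NFree.not_gt_of_mem_perp_basis (hN : NFree P) (hX : X = perp incomp (perp incomp X))
    (hB : IsBasis incomp X B) {x y : P} (hx : x ∈ X) (hy : y ∈ perp incomp B) : ¬ x < y := by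
  -- `Set Pᵒᵈ` is `Set P`, so after the rewrite `h` speaks about `X` and `B` themselves.
  have h := NFree.not_lt_of_mem_perp_basis (P := Pᵒᵈ) hN.dual (X := X) (B := B)
  rw [incomp_toDual_eq] at h
  exact h hX hB hx hy

theorem NFree.isDacey (hN : NFree P) : IsDacey (incomp (P := P)) := by
  intro X hX B hB
  refine Subset.antisymm (fun x hx y hy => ?_) (hB.perp_perp_subset hX)
  have hxy : x ≠ y := by
    rintro rfl
    exact disjoint_left.1 hB.disjoint_perp hx hy
  exact ⟨fun h => hN.not_gt_of_mem_perp_basis hX hB hx hy (h.lt_of_ne hxy),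
    fun h => hN.not_lt_of_mem_perp_basis hX hB hx hy (h.lt_of_ne hxy.symm)⟩

theorem IsDacey.nFree (hD : IsDacey (incomp (P := P))) : NFree P := by
  rintro ⟨a, b, c, d, hac, hbc, hbd, hab, had, hcd⟩
  set X := perp incomp (perp incomp ({b, d} : Set P))
  have haX : a ∈ perp incomp {b, d} := by simp [perp, hab, had]
  obtain ⟨B, hdB, hB⟩ := exists_isBasis_superset (X := X)
    (singleton_subset_iff.2 (subset_perp_perp incomp _ (by simp))) (pairwise_singleton d incomp)
  have hcB : c ∈ perp incomp B := by
    intro u hu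
    have hua : incomp u a := hB.1 hu a haX
    refine ⟨fun hcu => hua.2 (hac.le.trans hcu), fun huc_le => ?_⟩
    have huc : u < c := huc_le.lt_of_ne (by rintro rfl; exact hua.2 hac.le)
    have hud : incomp u d :=
      hB.2.1 hu (singleton_subset_iff.1 hdB) (by rintro rfl; exact hcd.2 huc.le)
    have hub : incomp u b := ⟨fun hub => hud.1 (hub.trans hbd.le),
      fun hbu => hbc.2 (hbu.lt_of_ne (by rintro rfl; exact hud.1 hbd.le)) huc⟩
    exact irrefl u (hB.1 hu u (by simp [perp, hub, hud]))
  have hbB : b ∈ perp incomp (perp incomp B) := by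
    rw [← hD X (perp_perp_perp incomp _).symm B hB]
    exact subset_perp_perp incomp _ (by simp)
  exact (hbB c hcB).1 hbc.le

end Poset

theorem nfree_iff_dacey {P : Type*} [PartialOrder P] [Fintype P] :
    (¬ ∃ a b c d : P, FormN a b c d) ↔ IsDacey (incomp (P := P)) :=
  ⟨NFree.isDacey, IsDacey.nFree⟩
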